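/- Let A be a graded-commutative dga over ℚ, let a, b ∈ A¹ be cocycles, and let T, T₂, V ∈ A¹ satisfy d(T) = a·b, d(T₂) = a·T, and d(V) = T·b. Then: (i) the family a₁₂ = 0, a₂₃ = T, a₃₄ = 0, a₁₃ = T₂, a₂₄ = V is a defining system for the 4-fold Massey product ⟨[a],[a],[b],[b]⟩, with associated representative c₁ = T₂·b + a·V, and c₁ is a cocycle; (ii) the family a₁₂ = T, a₂₃ = −T, a₃₄ = T, a₁₃ = −2·T₂, a₂₄ = −2·V is a defining system for the 4-fold Massey product ⟨[a],[b],[a],[b]⟩, with associated representative c₂ = −2·T₂·b + T·T − 2·a·V; and (iii) c₂ = −2·c₁. Hence these representatives of ⟨[a],[b],[a],[b]⟩ and ⟨[a],[a],[b],[b]⟩ are proportional with ratio −2, and in particular c₂ is a coboundary if and only if c₁ is. -/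

import Mathlib

/-!
Every defining-system equation is a one-line consequence of the Leibniz rule in degree one and
of the anticommutativity `x y = -y x` of degree-one elements; in particular `T·T = 0`, because
`A` has no `2`-torsion. Dropping `T·T` from `c₂` leaves exactly `-2·c₁`, and multiplication by
the unit `-2` of `ℚ` preserves being a coboundary.
-/

section GradedCommutative

variable {R A : Type*} [Semiring R] [Ring A] [Module R A] {deg : ℤ → Submodule R A}

theorem mul_eq_neg_mul_of_odd
    (hcomm : ∀ (p q : ℤ) (x y : A), x ∈ deg p → y ∈ deg q →
      x * y = (Int.negOnePow (p * q) : ℤ) • (y * x))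
    {p q : ℤ} (hp : Odd p) (hq : Odd q) {x y : A} (hx : x ∈ deg p) (hy : y ∈ deg q) :
    x * y = -(y * x) := by
  rw [hcomm p q x y hx hy, Int.negOnePow_odd _ (hp.mul hq), Units.val_neg, Units.val_one,
    neg_smul, one_smul]

theorem mul_self_eq_zero_of_odd [IsAddTorsionFree A]
    (hcomm : ∀ (p q : ℤ) (x y : A), x ∈ deg p → y ∈ deg q →
      x * y = (Int.negOnePow (p * q) : ℤ) • (y * x))
    {p : ℤ} (hp : Odd p) {x : A} (hx : x ∈ deg p) :
    x * x = 0 :=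
  self_eq_neg.1 (mul_eq_neg_mul_of_odd hcomm hp hp hx hx)

theorem map_mul_of_odd (d : A →ₗ[R] A)
    (hleibniz : ∀ (p : ℤ) (x y : A), x ∈ deg p →
      d (x * y) = d x * y + (Int.negOnePow p : ℤ) • (x * d y))
    {p : ℤ} (hp : Odd p) {x : A} (hx : x ∈ deg p) (y : A) :
    d (x * y) = d x * y - x * d y := by
  rw [hleibniz p x y hx, Int.negOnePow_odd _ hp, Units.val_neg, Units.val_one, neg_smul,
    one_smul, sub_eq_add_neg]

end GradedCommutative

theorem exists_mem_map_eq_smul_iff {K M N : Type*} [DivisionRing K] [AddCommGroup M]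
    [AddCommGroup N] [Module K M] [Module K N] (S : Submodule K M) (f : M →ₗ[K] N)
    {c : K} (hc : c ≠ 0) (y : N) :
    (∃ v ∈ S, f v = c • y) ↔ ∃ v ∈ S, f v = y := by
  constructor
  · rintro ⟨v, hv, hfv⟩
    refine ⟨c⁻¹ • v, S.smul_mem _ hv, ?_⟩
    rw [map_smul, hfv, smul_smul, inv_mul_cancel₀ hc, one_smul]
  · rintro ⟨v, hv, rfl⟩
    exact ⟨c • v, S.smul_mem _ hv, map_smul f c v⟩

theorem massey_aabb_abab_proportional_general
    (A : Type*) [Ring A] [Algebra ℚ A]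
    (deg : ℤ → Submodule ℚ A)
    (d : A →ₗ[ℚ] A)
    (hleibniz : ∀ (p : ℤ) (x y : A), x ∈ deg p →
      d (x * y) = d x * y + (Int.negOnePow p : ℤ) • (x * d y))
    (hcomm : ∀ (p q : ℤ) (x y : A), x ∈ deg p → y ∈ deg q →
      x * y = (Int.negOnePow (p * q) : ℤ) • (y * x))
    (a b T T₂ V : A)
    (ha : a ∈ deg 1) (hb : b ∈ deg 1) (hT : T ∈ deg 1) (hT₂ : T₂ ∈ deg 1)
    (hca : d a = 0) (hcb : d b = 0)
    (hdT : d T = a * b) (hdT₂ : d T₂ = a * T) (hdV : d V = T * b) :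
    -- (i) defining system for ⟨[a],[a],[b],[b]⟩ and its representative c₁ = T₂·b + a·V
    (d (0 : A) = a * a ∧
     d (0 : A) = b * b ∧
     d T₂ = (0 : A) * b + a * T ∧
     d V = a * (0 : A) + T * b ∧
     d (T₂ * b + a * V) = 0) ∧
    -- (ii) defining system for ⟨[a],[b],[a],[b]⟩ and its representative c₂
    (d (-T) = b * a ∧
     d ((-(2 : ℚ)) • T₂) = T * a + a * (-T) ∧
     d ((-(2 : ℚ)) • V) = b * T + (-T) * b) ∧
    -- (iii) c₂ = -2·c₁
    ((-(2 : ℚ)) • T₂ * b + T * T + a * ((-(2 : ℚ)) • V) = (-(2 : ℚ)) • (T₂ * b + a * V) ∧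
     ((∃ v ∈ deg 1, d v = (-(2 : ℚ)) • T₂ * b + T * T + a * ((-(2 : ℚ)) • V)) ↔
      (∃ v ∈ deg 1, d v = T₂ * b + a * V))) := by
  have anticomm {x y : A} (hx : x ∈ deg 1) (hy : y ∈ deg 1) : x * y = -(y * x) :=
    mul_eq_neg_mul_of_odd hcomm odd_one odd_one hx hy
  have : IsAddTorsionFree A := .of_module_rat A
  have square_zero {x : A} (hx : x ∈ deg 1) : x * x = 0 :=
    mul_self_eq_zero_of_odd hcomm odd_one hx
  have hc₁ : d (T₂ * b + a * V) = 0 := by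
    rw [map_add, map_mul_of_odd d hleibniz odd_one hT₂, map_mul_of_odd d hleibniz odd_one ha,
      hdT₂, hcb, hca, hdV, mul_assoc]
    simp
  have hc₂ : (-(2 : ℚ)) • T₂ * b + T * T + a * ((-(2 : ℚ)) • V)
      = (-(2 : ℚ)) • (T₂ * b + a * V) := by
    rw [square_zero hT, smul_mul_assoc, mul_smul_comm, smul_add, add_zero]
  refine ⟨⟨by simp [square_zero ha], by simp [square_zero hb], by simp [hdT₂], by simp [hdV], hc₁⟩,
    ⟨by simp [hdT, anticomm hb ha], ?_, ?_⟩, hc₂, ?_⟩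
  · rw [map_smul, hdT₂, anticomm hT ha, mul_neg, neg_smul, two_smul]
    abel
  · rw [map_smul, hdV, anticomm hb hT, neg_mul, neg_smul, two_smul]
    abel
  · rw [hc₂]
    exact exists_mem_map_eq_smul_iff (deg 1) d (by norm_num) _

/-- Let `A` be a graded-commutative dga over `ℚ`, `a, b ∈ A¹` cocycles,
and `T, T₂, V ∈ A¹` with `d T = a·b`, `d T₂ = a·T`, `d V = T·b`.  Then:
(i) `a₁₂ = 0, a₂₃ = T, a₃₄ = 0, a₁₃ = T₂, a₂₄ = V` is a defining system for
`⟨[a],[a],[b],[b]⟩` with associated representative `c₁ = T₂·b + a·V`, and `c₁` is a cocycle;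
(ii) `a₁₂ = T, a₂₃ = -T, a₃₄ = T, a₁₃ = -2·T₂, a₂₄ = -2·V` is a defining system for
`⟨[a],[b],[a],[b]⟩` with associated representative `c₂ = -2·T₂·b + T·T - 2·a·V`;
(iii) `c₂ = -2·c₁`; hence `c₂` is a coboundary iff `c₁` is. -/
theorem massey_aabb_abab_proportional
    (A : Type*) [Ring A] [Algebra ℚ A]
    (deg : ℤ → Submodule ℚ A) [GradedAlgebra deg]
    (d : A →ₗ[ℚ] A)
    (hd_mem : ∀ (p : ℤ) (x : A), x ∈ deg p → d x ∈ deg (p + 1))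
    (hd_sq : ∀ x : A, d (d x) = 0)
    (hleibniz : ∀ (p : ℤ) (x y : A), x ∈ deg p →
      d (x * y) = d x * y + (Int.negOnePow p : ℤ) • (x * d y))
    (hcomm : ∀ (p q : ℤ) (x y : A), x ∈ deg p → y ∈ deg q →
      x * y = (Int.negOnePow (p * q) : ℤ) • (y * x))
    (a b T T₂ V : A)
    (ha : a ∈ deg 1) (hb : b ∈ deg 1) (hT : T ∈ deg 1) (hT₂ : T₂ ∈ deg 1) (hV : V ∈ deg 1)
    (hca : d a = 0) (hcb : d b = 0)
    (hdT : d T = a * b) (hdT₂ : d T₂ = a * T) (hdV : d V = T * b) :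
    -- (i) defining system for ⟨[a],[a],[b],[b]⟩ and its representative c₁ = T₂·b + a·V
    (d (0 : A) = a * a ∧
     d (0 : A) = b * b ∧
     d T₂ = (0 : A) * b + a * T ∧
     d V = a * (0 : A) + T * b ∧
     d (T₂ * b + a * V) = 0) ∧
    -- (ii) defining system for ⟨[a],[b],[a],[b]⟩ and its representative c₂
    (d (-T) = b * a ∧
     d ((-(2 : ℚ)) • T₂) = T * a + a * (-T) ∧
     d ((-(2 : ℚ)) • V) = b * T + (-T) * b) ∧
    -- (iii) c₂ = -2·c₁
    ((-(2 : ℚ)) • T₂ * b + T * T + a * ((-(2 : ℚ)) • V) = (-(2 : ℚ)) • (T₂ * b + a * V) ∧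
     ((∃ v ∈ deg 1, d v = (-(2 : ℚ)) • T₂ * b + T * T + a * ((-(2 : ℚ)) • V)) ↔
      (∃ v ∈ deg 1, d v = T₂ * b + a * V))) :=
  massey_aabb_abab_proportional_general A deg d hleibniz hcomm a b T T₂ V ha hb hT hT₂ hca hcb hdT
    hdT₂ hdV
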